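/- arXiv:1504.07003 — 6 statements merged into one kernel-verified Lean document; each statement's English description precedes it below -/
import Mathlib

section
/- A relation R : X → X → Prop admits a factorization as g† ∘ g (i.e., there exists a type Y and a relation g : X → Y → Prop such that for all x, x', R x x' holds iff there exists y with g x y and g x' y) if and only if R is symmetric and satisfies: for all x, x', R x x' implies R x x. -/
universe u

/-- A relation `R : X → X → Prop` admits a factorization as `g† ∘ g` iff it is
symmetric and satisfies `R x x' → R x x`. -/
theorem positive_iff_symm_selfloop {X : Type u} (R : X → X → Prop) :
    (∃ (Y : Type u) (g : X → Y → Prop), ∀ x x', R x x' ↔ ∃ y, g x y ∧ g x' y) ↔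
      (Symmetric R ∧ ∀ x x', R x x' → R x x) := by
  constructor
  · rintro ⟨Y, g, h⟩
    constructor
    · intro a b hab
      rcases (h a b).1 hab with ⟨y, hy1, hy2⟩
      exact (h b a).2 ⟨y, hy2, hy1⟩
    · intro a b hab
      rcases (h a b).1 hab with ⟨y, hy1, _⟩
      exact (h a a).2 ⟨y, hy1, hy1⟩
  · rintro ⟨hs, hl⟩
    refine ⟨X × X, fun x p => (x = p.1 ∨ x = p.2) ∧ R p.1 p.2, fun x x' => ⟨fun h => ?_, ?_⟩⟩
    · exact ⟨(x, x'), ⟨Or.inl rfl, h⟩, ⟨Or.inr rfl, h⟩⟩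
    · rintro ⟨⟨a, b⟩, ⟨h1, hab⟩, ⟨h2, -⟩⟩
      rcases h1 with rfl | rfl <;> rcases h2 with rfl | rfl
      · exact hl _ _ hab
      · exact hab
      · exact hs hab
      · exact hl _ _ (hs hab)
end

section
/- For any set X, there is a bijection between the set of relations R : X → X → Prop that are symmetric and satisfy (R x y → R x x for all x, y), and the set of pairs (s, G) where s : Set X and G is a simple graph on the subtype {x // x ∈ s}. The bijection sends R to the pair consisting of its support s = {x | R x x} together with the simple graph on s whose adjacency relation relates distinct x, y ∈ s exactly when R x y. -/
/-!
A positive relation `R` splits into its diagonal, which is the indicator of its support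
`s = {x | R x x}`, and its off-diagonal part, which is a simple graph on `X`. Positivity says
exactly that every edge of this graph has both ends in `s`, and simple graphs on `X` with all
edges inside `s` are the same as simple graphs on `s`: induce on `s` one way, add the remaining
vertices as isolated ones the other way.
-/

def PositiveRel (X : Type*) : Type _ :=
  {R : X → X → Prop // Symmetric R ∧ ∀ x y, R x y → R x x}

namespace PositiveRel

variable {X : Type*}

def support (R : PositiveRel X) : Set X := {x | R.1 x x}

def graph (R : PositiveRel X) : SimpleGraph X := SimpleGraph.fromRel R.1

theorem graph_adj (R : PositiveRel X) {x y : X} : R.graph.Adj x y ↔ x ≠ y ∧ R.1 x y := by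
  rw [graph, SimpleGraph.fromRel_adj, or_iff_left_of_imp (R.2.1 ·)]

theorem support_graph_subset (R : PositiveRel X) : R.graph.support ⊆ R.support := by
  rintro x ⟨y, hxy⟩
  exact R.2.2 x y (R.graph_adj.1 hxy).2

theorem eq_or_graph_adj_iff (R : PositiveRel X) {x y : X} :
    (x = y ∧ x ∈ R.support) ∨ R.graph.Adj x y ↔ R.1 x y := by
  rw [graph_adj]
  by_cases hxy : x = y
  · subst hxy
    simp [support]
  · simp [hxy]

def toSigma (R : PositiveRel X) : (s : Set X) × SimpleGraph s :=
  ⟨R.support, R.graph.induce R.support⟩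

def ofSigma (p : (s : Set X) × SimpleGraph s) : PositiveRel X :=
  ⟨fun x y => (x = y ∧ x ∈ p.1) ∨ p.2.spanningCoe.Adj x y,
    fun _ _ => Or.imp (fun ⟨hxy, hx⟩ => ⟨hxy.symm, hxy ▸ hx⟩) SimpleGraph.Adj.symm,
    by
      rintro x y (⟨-, hx⟩ | ⟨-, u, v, -, rfl, -⟩)
      · exact .inl ⟨rfl, hx⟩
      · exact .inl ⟨rfl, u.2⟩⟩

theorem support_ofSigma (p : (s : Set X) × SimpleGraph s) : (ofSigma p).support = p.1 := by
  ext x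
  simp [support, ofSigma]

theorem graph_ofSigma (p : (s : Set X) × SimpleGraph s) :
    (ofSigma p).graph = p.2.spanningCoe := by
  ext x y
  rw [graph_adj]
  constructor
  · rintro ⟨hxy, ⟨hxy', -⟩ | hadj⟩
    exacts [absurd hxy' hxy, hadj]
  · exact fun hadj => ⟨hadj.ne, .inr hadj⟩

theorem ofSigma_toSigma (R : PositiveRel X) : ofSigma R.toSigma = R := by
  apply Subtype.ext
  ext x y
  simp only [ofSigma, toSigma, (R.graph.spanningCoe_induce_eq_self _).2 R.support_graph_subset]
  exact R.eq_or_graph_adj_iff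

theorem toSigma_ofSigma (p : (s : Set X) × SimpleGraph s) : (ofSigma p).toSigma = p := by
  obtain ⟨s, G⟩ := p
  rw [toSigma, support_ofSigma, graph_ofSigma, SimpleGraph.induce_spanningCoe]

def equivSigmaSimpleGraph : PositiveRel X ≃ (s : Set X) × SimpleGraph s where
  toFun := toSigma
  invFun := ofSigma
  left_inv := ofSigma_toSigma
  right_inv := toSigma_ofSigma

end PositiveRel

/-- States of `X` in CPM(Rel) — symmetric relations `R` with `R x y → R x x` —
are in bijection with pairs of a subset `s ⊆ X` and a simple graph on `s`.
The bijection sends `R` to its support `{x | R x x}` with the simple graph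
relating distinct `x, y` in the support exactly when `R x y`. -/
theorem states_equiv_graphs {X : Type*} :
    ∃ e : {R : X → X → Prop // Symmetric R ∧ ∀ x y, R x y → R x x} ≃
        ((s : Set X) × SimpleGraph s),
      ∀ R : {R : X → X → Prop // Symmetric R ∧ ∀ x y, R x y → R x x},
        (e R).1 = {x | R.1 x x} ∧
        ∀ x y : (e R).1, (e R).2.Adj x y ↔ ((x : X) ≠ (y : X) ∧ R.1 x y) :=
  ⟨PositiveRel.equivSigmaSimpleGraph, fun R => ⟨rfl, fun _ _ => PositiveRel.graph_adj R⟩⟩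
end

section
/- Let R : X → X → Prop be symmetric and satisfy R x y → R x x for all x, y. Then there exists a set U ⊆ X such that (R x y ↔ x ∈ U ∧ y ∈ U) for all x, y, if and only if for all x, y, R x x and R y y together imply R x y. -/
/-- A state `R` of `X` in CPM(Rel) (symmetric, with `R x y → R x x`) is pure —
i.e. of the form `R x y ↔ x ∈ U ∧ y ∈ U` for some `U ⊆ X` — iff
`R x x` and `R y y` together imply `R x y` for all `x, y`. -/
theorem pure_iff_complete {X : Type*} (R : X → X → Prop)
    (hsymm : Symmetric R) (hloop : ∀ x y, R x y → R x x) :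
    (∃ U : Set X, ∀ x y, R x y ↔ x ∈ U ∧ y ∈ U) ↔
      (∀ x y, R x x → R y y → R x y) := by
  constructor
  · rintro ⟨U, hU⟩ x y hx hy
    exact (hU x y).2 ⟨((hU x x).1 hx).1, ((hU y y).1 hy).1⟩
  · intro h
    refine ⟨{x | R x x}, fun x y => ⟨fun hxy => ⟨hloop x y hxy, hloop y x (hsymm hxy)⟩, fun ⟨hx, hy⟩ => h x y hx hy⟩⟩
end

section
/- There exist relations R, S : Fin 3 → Fin 3 → Prop such that: R and S are each symmetric and satisfy the condition (· x y → · x x); neither R nor S is pure (i.e., neither is of the form x ∈ U ∧ y ∈ U for some set U); but their union R ⊔ S (defined by (R ⊔ S) x y ↔ R x y ∨ S x y) is pure, i.e., there exists a set U with (R ⊔ S) x y ↔ x ∈ U ∧ y ∈ U. -/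
/-- There exist two mixed (non-pure) states `R, S` of `Fin 3` in CPM(Rel) whose
union is a pure state. -/
theorem pure_mixture_of_mixed :
    ∃ R S : Fin 3 → Fin 3 → Prop,
      (Symmetric R ∧ ∀ x y, R x y → R x x) ∧
      (Symmetric S ∧ ∀ x y, S x y → S x x) ∧
      (¬ ∃ U : Set (Fin 3), ∀ x y, R x y ↔ x ∈ U ∧ y ∈ U) ∧
      (¬ ∃ U : Set (Fin 3), ∀ x y, S x y ↔ x ∈ U ∧ y ∈ U) ∧
      (∃ U : Set (Fin 3), ∀ x y, (R x y ∨ S x y) ↔ x ∈ U ∧ y ∈ U) := by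
  refine ⟨fun x y => (x ≠ 2 ∧ y ≠ 2) ∨ (x = 2 ∧ y = 2),
         fun x y => (x ≠ 1 ∧ y ≠ 1) ∨ (x ≠ 0 ∧ y ≠ 0),
         ⟨fun x y h => h.imp And.symm And.symm, by decide⟩,
         ⟨fun x y h => h.imp And.symm And.symm, by decide⟩, ?_, ?_, Set.univ, ?_⟩
  · rintro ⟨U, h⟩
    have h0 : (0 : Fin 3) ∈ U := ((h 0 0).mp (Or.inl ⟨by decide, by decide⟩)).1
    have h2 : (2 : Fin 3) ∈ U := ((h 2 2).mp (Or.inr ⟨rfl, rfl⟩)).1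
    have := (h 0 2).mpr ⟨h0, h2⟩
    rcases this with ⟨_, hc⟩ | ⟨hc, _⟩ <;> exact absurd hc (by decide)
  · rintro ⟨U, h⟩
    have h0 : (0 : Fin 3) ∈ U := ((h 0 0).mp (Or.inl ⟨by decide, by decide⟩)).1
    have h1 : (1 : Fin 3) ∈ U := ((h 1 1).mp (Or.inr ⟨by decide, by decide⟩)).1
    have := (h 0 1).mpr ⟨h0, h1⟩
    rcases this with ⟨_, hc⟩ | ⟨hc, _⟩ <;> exact absurd hc (by decide)
  · have hall : ∀ x y : Fin 3,
        ((x ≠ 2 ∧ y ≠ 2) ∨ (x = 2 ∧ y = 2)) ∨ ((x ≠ 1 ∧ y ≠ 1) ∨ (x ≠ 0 ∧ y ≠ 0)) := by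
      decide
    intro x y
    exact ⟨fun _ => ⟨trivial, trivial⟩, fun _ => hall x y⟩
end

section
/- The map G sending a completely positive relation R : A → A → B → B → Prop to the edge relation G(R) : (A × B) → (A × B) → Prop, defined by G(R) (a, b) (a', b') ↔ R a a' b b', is a bijection from the set of completely positive relations A → B onto the set of edge relations E on A × B that are symmetric and satisfy E p q → E p p; moreover G sends relational composition (S ∘ R) a a' c c' ↔ ∃ b b', R a a' b b' ∧ S b b' c c' to graph composition (G(S) ∘ G(R)) (a, c) (a', c') ↔ ∃ b b', G(R) (a, b) (a', b') ∧ G(S) (b, c) (b', c'), and sends the identity CP relation 1_A a₁ a₂ a₃ a₄ ↔ (a₁ = a₃ ∧ a₂ = a₄) to the identity edge relation 1_A (a₁, a₂) (a₃, a₄) ↔ (a₁ = a₂ ∧ a₃ = a₄). -/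
/-- A relation `R : A → A → B → B → Prop` is completely positive. -/
def IsCP {A B : Type*} (R : A → A → B → B → Prop) : Prop :=
  (∀ a₁ a₂ b₁ b₂, R a₁ a₂ b₁ b₂ → R a₂ a₁ b₂ b₁) ∧
  (∀ a₁ a₂ b₁ b₂, R a₁ a₂ b₁ b₂ → R a₁ a₁ b₁ b₁)

/-- An edge relation on `A × B` encodes a graph: symmetric with self-loops on
every vertex incident to an edge. -/
def IsGraph {V : Type*} (E : V → V → Prop) : Prop :=
  Symmetric E ∧ ∀ p q, E p q → E p p

/-- The edge relation `G(R)` associated with a CP relation `R`: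
`G(R) (a, b) (a', b') ↔ R a a' b b'`. -/
def graphOf {A B : Type*} (R : A → A → B → B → Prop) :
    (A × B) → (A × B) → Prop :=
  fun p q => R p.1 q.1 p.2 q.2

/-- Composition of CP relations. -/
def cpComp {A B C : Type*} (R : A → A → B → B → Prop)
    (S : B → B → C → C → Prop) : A → A → C → C → Prop :=
  fun a a' c c' => ∃ b b', R a a' b b' ∧ S b b' c c'

/-- Graph composition of edge relations. -/
def graphComp {A B C : Type*} (E : (A × B) → (A × B) → Prop)
    (E' : (B × C) → (B × C) → Prop) : (A × C) → (A × C) → Prop :=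
  fun p q => ∃ b b', E (p.1, b) (q.1, b') ∧ E' (b, p.2) (b', q.2)

/-- `G` is a bijection from CP relations onto graph edge relations, sending
relational composition to graph composition and identities to identities. -/
theorem graphOf_bijective_functorial {A B C : Type*} :
    (∀ R : A → A → B → B → Prop, IsCP R → IsGraph (graphOf R)) ∧
    (∀ R S : A → A → B → B → Prop, IsCP R → IsCP S →
      graphOf R = graphOf S → R = S) ∧
    (∀ E : (A × B) → (A × B) → Prop, IsGraph E →
      ∃ R : A → A → B → B → Prop, IsCP R ∧ graphOf R = E) ∧
    (∀ (R : A → A → B → B → Prop) (S : B → B → C → C → Prop),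
      IsCP R → IsCP S →
      graphOf (cpComp R S) = graphComp (graphOf R) (graphOf S)) ∧
    (graphOf (fun a₁ a₂ a₃ a₄ : A => a₁ = a₃ ∧ a₂ = a₄) =
      fun p q : A × A => p.1 = p.2 ∧ q.1 = q.2) := by
  refine ⟨?_, ?_, ?_, ?_, ?_⟩
  · rintro R ⟨h1, h2⟩
    exact ⟨fun p q h => h1 _ _ _ _ h, fun p q h => h2 _ _ _ _ h⟩
  · intro R S _ _ h
    funext a a' b b'
    exact congrFun (congrFun h (a, b)) (a', b')
  · intro E ⟨h1, h2⟩
    refine ⟨fun a a' b b' => E (a, b) (a', b'), ⟨?_, ?_⟩, rfl⟩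
    · exact fun a₁ a₂ b₁ b₂ h => h1 h
    · exact fun a₁ a₂ b₁ b₂ h => h2 _ _ h
  · intro R S _ _; rfl
  · rfl
end

section
/- Under the bijection between completely positive relations and edge relations, the tensor product corresponds to the graph tensor: for edge relations E on A × C and E' on B × D (each symmetric and satisfying the self-loop condition E p q → E p p), the relation (E ⊗ E') ((a, b), (c, d)) ((a', b'), (c', d')) ↔ E (a, c) (a', c') ∧ E' (b, d) (b', d') is again symmetric with the self-loop condition, and for completely positive R : A → A → C → C → Prop and S : B → B → D → D → Prop one has G(R ⊗ S) = G(R) ⊗ G(S), where (R ⊗ S) (a, b) (a', b') (c, d) (c', d') ↔ R a a' c c' ∧ S b b' d d' and G(R) (a, c) (a', c') ↔ R a a' c c'. -/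
/-- Tensor product of CP relations. -/
def cpTensor {A B C D : Type*} (R : A → A → C → C → Prop)
    (S : B → B → D → D → Prop) :
    (A × B) → (A × B) → (C × D) → (C × D) → Prop :=
  fun p p' q q' => R p.1 p'.1 q.1 q'.1 ∧ S p.2 p'.2 q.2 q'.2

/-- The graph tensor of edge relations `E : (A × C) → (A × C) → Prop` and
`E' : (B × D) → (B × D) → Prop`. -/
def graphTensor {A B C D : Type*} (E : (A × C) → (A × C) → Prop)
    (E' : (B × D) → (B × D) → Prop) :
    ((A × B) × (C × D)) → ((A × B) × (C × D)) → Prop :=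
  fun p q => E (p.1.1, p.2.1) (q.1.1, q.2.1) ∧ E' (p.1.2, p.2.2) (q.1.2, q.2.2)

/-- The graph tensor preserves the graph conditions, and under the encoding `G`
the CP tensor corresponds to the graph tensor. -/
theorem graph_tensor_corresponds {A B C D : Type*} :
    (∀ (E : (A × C) → (A × C) → Prop) (E' : (B × D) → (B × D) → Prop),
      IsGraph E → IsGraph E' → IsGraph (graphTensor E E')) ∧
    (∀ (R : A → A → C → C → Prop) (S : B → B → D → D → Prop),
      IsCP R → IsCP S →
      graphOf (cpTensor R S) = graphTensor (graphOf R) (graphOf S)) := by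
  constructor
  · rintro E E' ⟨hEs, hEl⟩ ⟨hE's, hE'l⟩
    exact ⟨fun p q ⟨h1, h2⟩ => ⟨hEs h1, hE's h2⟩,
      fun p q ⟨h1, h2⟩ => ⟨hEl _ _ h1, hE'l _ _ h2⟩⟩
  · intro R S _ _
    funext p q
    rfl
end
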